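/- Let (V, P) be a finite irreducible Markov chain with stationary distribution π and at least two states, and let A_max = max{Ψ_min, Δ_min/2}. Then every eigenvalue λ ∈ ℂ of P, regarded as a complex matrix, with λ ≠ 1 satisfies 1 − |λ| ≥ 16·Ψ_min·A_max. -/

import Mathlib

/-!
The map `A ↦ A_u`, averaged over a uniform threshold `u ∈ [0, 1]`, is a positive linear operator
`K` on functions of sets (the evolving-set process of Morris and Peres), dual to `P`: it sends
`B ↦ ∑_{x ∈ B} π(x) v(x)` to `A ↦ ∑_{x ∈ A} π(x) (P v)(x)`. Hence `π(A_u)` is a martingale and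
`K` lowers `h(A) = π(A)(1 - π(A))` by the variance of `π(A_u)`, which is at least
`(∫ |π(A_u) - π(A)|)² = 4 Ψ(A)²` and at least `Δ_min ∫ |π(A_u) - π(A)| = 2 Δ_min Ψ(A)`; since
`h ≤ 1/4` this gives `K h ≤ (1 - 16 Ψ_min A_max) h`. Now `π(x) (Pⁿ(x, y) - π(y))` is `Kⁿ`, evaluated
at `{x}`, of a function of sets whose absolute values sum over `y` to `2h`, so
`∑_y |Pⁿ(x, y) - π(y)| ≤ 2 (1 - 16 Ψ_min A_max)ⁿ`. An eigenvector of `λ ≠ 1` is orthogonal to `π`,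
so it satisfies `|λ|ⁿ ‖g‖ ≤ 2 (1 - 16 Ψ_min A_max)ⁿ ‖g‖` for every `n`.
-/

open scoped Classical

noncomputable section

namespace Stmt16

variable {V : Type*} [Fintype V]

/-- measure of a finite set of states under `pi`. -/
def meas (pi : V → ℝ) (A : Finset V) : ℝ := ∑ x ∈ A, pi x

/-- ergodic flow `Q(A,y) = ∑_{x∈A} π(x)P(x,y)` from a set to a point. -/
def flowPt (P : V → V → ℝ) (pi : V → ℝ) (A : Finset V) (y : V) : ℝ :=
  ∑ x ∈ A, pi x * P x y

/-- the evolving set `A_u = {y : Q(A,y) ≥ u·π(y)}`. -/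
def evolve (P : V → V → ℝ) (pi : V → ℝ) (A : Finset V) (u : ℝ) : Finset V :=
  Finset.univ.filter fun y => u * pi y ≤ flowPt P pi A y

/-- modified ergodic flow `Ψ(A) = (1/2)∫₀¹ |π(A_u) − π(A)| du`. -/
def modFlow (P : V → V → ℝ) (pi : V → ℝ) (A : Finset V) : ℝ :=
  (1 / 2) * ∫ u in (0:ℝ)..1, |meas pi (evolve P pi A u) - meas pi A|

/-- `Ψ_min = min{Ψ(A) : A a nonempty proper subset}`. -/
def psiMin (P : V → V → ℝ) (pi : V → ℝ) : ℝ :=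
  sInf {r | ∃ A : Finset V, A.Nonempty ∧ A ≠ Finset.univ ∧ r = modFlow P pi A}

/-- `Δ_min = min{|π(A) − π(B)| : π(A) ≠ π(B)}`. -/
def deltaMin (pi : V → ℝ) : ℝ :=
  sInf {r | ∃ A B : Finset V, meas pi A ≠ meas pi B ∧ r = |meas pi A - meas pi B|}

/-- `A_max = max{Ψ_min, Δ_min/2}`. -/
def aMax (P : V → V → ℝ) (pi : V → ℝ) : ℝ :=
  max (psiMin P pi) (deltaMin pi / 2)

open MeasureTheory Matrix

theorem abs_map_le_map_abs {E F 𝓕 : Type*} [AddCommGroup E] [Lattice E] [IsOrderedAddMonoid E]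
    [AddCommGroup F] [Lattice F] [IsOrderedAddMonoid F] [FunLike 𝓕 E F] [AddMonoidHomClass 𝓕 E F]
    {T : 𝓕} (hT : Monotone T) (f : E) :
    |T f| ≤ T |f| :=
  abs_le'.2 ⟨hT (le_abs_self f), by rw [← map_neg]; exact hT (neg_le_abs f)⟩

theorem pow_apply_le_pow_smul {M : Type*} [AddCommGroup M] [PartialOrder M] [Module ℝ M]
    [PosSMulMono ℝ M] {T : Module.End ℝ M} (hT : Monotone T) {c : ℝ} (hc : 0 ≤ c) {H : M}
    (hH : T H ≤ c • H) (n : ℕ) : (T ^ n) H ≤ c ^ n • H := by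
  induction n with
  | zero => simp
  | succ n ih =>
    calc (T ^ (n + 1)) H = (T ^ n) (T H) := by rw [pow_succ, Module.End.mul_apply]
      _ ≤ (T ^ n) (c • H) := by simp only [Module.End.pow_apply]; exact hT.iterate n hH
      _ = c • (T ^ n) H := map_smul _ _ _
      _ ≤ c • c ^ n • H := smul_le_smul_of_nonneg_left ih hc
      _ = c ^ (n + 1) • H := by rw [smul_smul, pow_succ']

theorem le_of_forall_pow_le_mul_pow {a b C : ℝ} (hb : 0 ≤ b)
    (h : ∀ n : ℕ, a ^ n ≤ C * b ^ n) : a ≤ b := by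
  by_contra! hba
  have ha : 0 < a := hb.trans_lt hba
  have hC : 0 < |C| + 1 := by positivity
  obtain ⟨n, hn⟩ := exists_pow_lt_of_lt_one (inv_pos.2 hC) ((div_lt_one ha).2 hba)
  rw [div_pow, div_lt_iff₀ (pow_pos ha n), ← div_eq_inv_mul, lt_div_iff₀ hC] at hn
  nlinarith [h n, le_abs_self C, pow_nonneg hb n]

theorem sq_integral_abs_le_integral_sq {f : ℝ → ℝ} (hf : IntervalIntegrable f volume 0 1)
    (hf2 : IntervalIntegrable (fun u => f u ^ 2) volume 0 1) :
    (∫ u in (0:ℝ)..1, |f u|) ^ 2 ≤ ∫ u in (0:ℝ)..1, f u ^ 2 := by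
  set J := ∫ u in (0:ℝ)..1, |f u|
  have h := intervalIntegral.integral_mono_on zero_le_one (hf.abs.const_mul (2 * J))
    (hf2.add (intervalIntegrable_const (c := J ^ 2))) fun u _ => by
      nlinarith [sq_nonneg (|f u| - J), sq_abs (f u)]
  rw [intervalIntegral.integral_const_mul,
    intervalIntegral.integral_add hf2 intervalIntegrable_const, intervalIntegral.integral_const,
    smul_eq_mul] at h
  linarith

theorem mul_integral_abs_le_integral_sq {f : ℝ → ℝ} {d : ℝ} (hf : IntervalIntegrable f volume 0 1)
    (hf2 : IntervalIntegrable (fun u => f u ^ 2) volume 0 1) (hd : ∀ u, f u ≠ 0 → d ≤ |f u|) :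
    d * ∫ u in (0:ℝ)..1, |f u| ≤ ∫ u in (0:ℝ)..1, f u ^ 2 := by
  rw [← intervalIntegral.integral_const_mul]
  refine intervalIntegral.integral_mono_on zero_le_one (hf.abs.const_mul d) hf2 fun u _ => ?_
  by_cases hu : f u = 0
  · simp [hu]
  · calc d * |f u| ≤ |f u| * |f u| := mul_le_mul_of_nonneg_right (hd u hu) (abs_nonneg _)
      _ = f u ^ 2 := by rw [abs_mul_abs_self, sq]

theorem intervalIntegral_ite_le (c : ℝ) {t : ℝ} (ht0 : 0 ≤ t) (ht1 : t ≤ 1) :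
    ∫ u in (0:ℝ)..1, (if u ≤ t then c else 0) = c * t := by
  have := intervalIntegral.integral_indicator (f := fun _ => c) (μ := volume) ⟨ht0, ht1⟩
  simp only [Set.indicator, Set.mem_ofPred_eq] at this
  rw [this, intervalIntegral.integral_const, smul_eq_mul, sub_zero, mul_comm]

section EvolvingSets

variable {P : V → V → ℝ} {pi : V → ℝ}

theorem measurable_evolve (A : Finset V) : Measurable (evolve P pi A) :=
  measurable_finset_iff.2 fun z => by
    simp only [evolve, Finset.mem_filter, Finset.mem_univ, true_and]
    exact measurableSet_setOfPred.1 (measurableSet_le (measurable_id.mul_const _) measurable_const)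

theorem intervalIntegrable_comp_evolve (F : Finset V → ℝ) (A : Finset V) :
    IntervalIntegrable (fun u => F (evolve P pi A u)) volume 0 1 := by
  refine (intervalIntegrable_iff_integrableOn_Ioc_of_le zero_le_one).2 <|
    IntegrableOn.of_bound measure_Ioc_lt_top
      (Measurable.of_discrete.comp (measurable_evolve A)).aestronglyMeasurable
      (∑ B, ‖F B‖) (ae_of_all _ fun u => Finset.single_le_sum (f := fun B => ‖F B‖)
        (fun _ _ => norm_nonneg _) (Finset.mem_univ (evolve P pi A u)))

/-- The transition operator of the evolving-set process: `F` is sent to `A ↦ 𝔼 F(A_U)` with `U`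
uniform on `[0, 1]`. -/
def evolveOp (P : V → V → ℝ) (pi : V → ℝ) : Module.End ℝ (Finset V → ℝ) where
  toFun F A := ∫ u in (0:ℝ)..1, F (evolve P pi A u)
  map_add' F G := funext fun A => intervalIntegral.integral_add
    (intervalIntegrable_comp_evolve F A) (intervalIntegrable_comp_evolve G A)
  map_smul' c _ := funext fun _ => intervalIntegral.integral_const_mul c _

theorem evolveOp_apply (F : Finset V → ℝ) (A : Finset V) :
    evolveOp P pi F A = ∫ u in (0:ℝ)..1, F (evolve P pi A u) := rfl

theorem evolveOp_mono : Monotone (evolveOp P pi) := fun F G hFG A =>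
  intervalIntegral.integral_mono_on zero_le_one (intervalIntegrable_comp_evolve F A)
    (intervalIntegrable_comp_evolve G A) fun _ _ => hFG _

/-- `y ∈ A_u` exactly for `u ≤ Q(A, y) / π(y) ∈ [0, 1]`. -/
theorem evolveOp_sum (hP0 : ∀ x y, 0 ≤ P x y) (hpi0 : ∀ x, 0 < pi x)
    (hstat : ∀ y, ∑ x, pi x * P x y = pi y) (w : V → ℝ) (A : Finset V) :
    evolveOp P pi (fun B => ∑ z ∈ B, w z) A = ∑ z, flowPt P pi A z / pi z * w z := by
  have hflow_nonneg (z : V) : 0 ≤ flowPt P pi A z :=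
    Finset.sum_nonneg fun x _ => mul_nonneg (hpi0 x).le (hP0 x z)
  have hflow_le (z : V) : flowPt P pi A z ≤ pi z := hstat z ▸
    Finset.sum_le_sum_of_subset_of_nonneg (Finset.subset_univ A)
      fun x _ _ => mul_nonneg (hpi0 x).le (hP0 x z)
  have hmem (u : ℝ) (z : V) : z ∈ evolve P pi A u ↔ u ≤ flowPt P pi A z / pi z := by
    simp [evolve, le_div_iff₀ (hpi0 z)]
  have hsum (u : ℝ) : ∑ z ∈ evolve P pi A u, w z = ∑ z, if z ∈ evolve P pi A u then w z else 0 :=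
    (Finset.sum_ite_mem_eq _ _).symm
  rw [evolveOp_apply, funext hsum, intervalIntegral.integral_finsetSum fun z _ =>
    intervalIntegrable_comp_evolve (fun B => if z ∈ B then w z else 0) A]
  refine Finset.sum_congr rfl fun z _ => ?_
  simp only [hmem]
  rw [intervalIntegral_ite_le _ (div_nonneg (hflow_nonneg z) (hpi0 z).le)
    ((div_le_one (hpi0 z)).2 (hflow_le z)), mul_comm]

theorem evolveOp_sum_mul (hP0 : ∀ x y, 0 ≤ P x y) (hpi0 : ∀ x, 0 < pi x)
    (hstat : ∀ y, ∑ x, pi x * P x y = pi y) (v : V → ℝ) :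
    evolveOp P pi (fun B => ∑ x ∈ B, pi x * v x)
      = fun A => ∑ x ∈ A, pi x * (Matrix.of P *ᵥ v) x := by
  funext A
  rw [evolveOp_sum hP0 hpi0 hstat]
  calc ∑ z, flowPt P pi A z / pi z * (pi z * v z) = ∑ z, flowPt P pi A z * v z := by
        refine Finset.sum_congr rfl fun z _ => ?_
        field_simp [(hpi0 z).ne']
    _ = ∑ x ∈ A, pi x * (Matrix.of P *ᵥ v) x := by
        simp only [flowPt, mulVec, dotProduct, of_apply, Finset.sum_mul,
          Finset.mul_sum, mul_assoc]
        exact Finset.sum_comm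

theorem evolveOp_pow_sum_mul (hP0 : ∀ x y, 0 ≤ P x y) (hpi0 : ∀ x, 0 < pi x)
    (hstat : ∀ y, ∑ x, pi x * P x y = pi y) (v : V → ℝ) (n : ℕ) :
    (evolveOp P pi ^ n) (fun B => ∑ x ∈ B, pi x * v x)
      = fun A => ∑ x ∈ A, pi x * ((Matrix.of P ^ n) *ᵥ v) x := by
  induction n with
  | zero => simp
  | succ n ih =>
    rw [pow_succ', Module.End.mul_apply, ih, evolveOp_sum_mul hP0 hpi0 hstat,
      mulVec_mulVec, ← pow_succ']

theorem evolveOp_pow_meas (hP0 : ∀ x y, 0 ≤ P x y) (hP1 : ∀ x, ∑ y, P x y = 1)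
    (hpi0 : ∀ x, 0 < pi x) (hstat : ∀ y, ∑ x, pi x * P x y = pi y) (n : ℕ) :
    (evolveOp P pi ^ n) (meas pi) = meas pi := by
  have hP : Matrix.of P ∈ rowStochastic ℝ V :=
    mem_rowStochastic_iff_sum.2 ⟨hP0, hP1⟩
  have hmeas : meas pi = fun B => ∑ x ∈ B, pi x * (1 : V → ℝ) x := by
    funext B; simp [meas]
  rw [hmeas, evolveOp_pow_sum_mul hP0 hpi0 hstat,
    one_vecMul_of_mem_rowStochastic (pow_mem hP n)]

end EvolvingSets

theorem deltaMin_nonneg {α : Type*} {pi : α → ℝ} : 0 ≤ deltaMin pi :=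
  Real.sInf_nonneg fun _ ⟨_, _, _, hr⟩ => hr ▸ abs_nonneg _

theorem deltaMin_le {α : Type*} {pi : α → ℝ} {A B : Finset α} (h : meas pi A ≠ meas pi B) :
    deltaMin pi ≤ |meas pi A - meas pi B| :=
  csInf_le ⟨0, fun _ ⟨_, _, _, hr⟩ => hr ▸ abs_nonneg _⟩ ⟨A, B, h, rfl⟩

/-- The variance of the indicator of `B` under `π`. -/
def indicatorVar (pi : V → ℝ) (B : Finset V) : ℝ := meas pi B * (1 - meas pi B)

section Contraction

variable {P : V → V → ℝ} {pi : V → ℝ}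

theorem modFlow_nonneg (A : Finset V) : 0 ≤ modFlow P pi A :=
  mul_nonneg one_half_pos.le (intervalIntegral.integral_nonneg zero_le_one fun _ _ => abs_nonneg _)

theorem psiMin_nonneg : 0 ≤ psiMin P pi :=
  Real.sInf_nonneg fun _ ⟨A, _, _, hr⟩ => hr ▸ modFlow_nonneg A

theorem psiMin_le_modFlow {A : Finset V} (hA : A.Nonempty) (hA' : A ≠ Finset.univ) :
    psiMin P pi ≤ modFlow P pi A :=
  csInf_le ⟨0, fun _ ⟨B, _, _, hr⟩ => hr ▸ modFlow_nonneg B⟩ ⟨A, hA, hA', rfl⟩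

theorem aMax_nonneg : 0 ≤ aMax P pi := psiMin_nonneg.trans (le_max_left _ _)

theorem four_mul_psiMin_mul_aMax_le {A : Finset V} (hA : A.Nonempty) (hA' : A ≠ Finset.univ) :
    4 * psiMin P pi * aMax P pi
      ≤ ∫ u in (0:ℝ)..1, (meas pi (evolve P pi A u) - meas pi A) ^ 2 := by
  set f := fun u => meas pi (evolve P pi A u) - meas pi A
  have hf : IntervalIntegrable f volume 0 1 :=
    intervalIntegrable_comp_evolve (fun B => meas pi B - meas pi A) A
  have hf2 : IntervalIntegrable (fun u => f u ^ 2) volume 0 1 :=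
    intervalIntegrable_comp_evolve (fun B => (meas pi B - meas pi A) ^ 2) A
  have hJ : ∫ u in (0:ℝ)..1, |f u| = 2 * modFlow P pi A := by rw [modFlow]; ring
  have hsq := sq_integral_abs_le_integral_sq hf hf2
  have hdelta := mul_integral_abs_le_integral_sq hf hf2 fun u hu => deltaMin_le (sub_ne_zero.1 hu)
  rw [hJ] at hsq hdelta
  have hpsi := psiMin_le_modFlow (P := P) (pi := pi) hA hA'
  have hpsi0 : 0 ≤ psiMin P pi := psiMin_nonneg
  have hdelta0 : 0 ≤ deltaMin pi := deltaMin_nonneg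
  rw [aMax, mul_max_of_nonneg _ _ (by positivity)]
  exact max_le (by nlinarith) (by nlinarith)

theorem evolveOp_indicatorVar (hP0 : ∀ x y, 0 ≤ P x y) (hP1 : ∀ x, ∑ y, P x y = 1)
    (hpi0 : ∀ x, 0 < pi x) (hstat : ∀ y, ∑ x, pi x * P x y = pi y) (A : Finset V) :
    evolveOp P pi (indicatorVar pi) A
      = indicatorVar pi A - ∫ u in (0:ℝ)..1, (meas pi (evolve P pi A u) - meas pi A) ^ 2 := by
  set m := meas pi A
  have hdecomp : indicatorVar pi = (fun _ => m * (1 - m)) - (fun B => (meas pi B - m) ^ 2)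
      + (1 - 2 * m) • (meas pi - fun _ => m) := by
    funext B; simp only [indicatorVar, Pi.add_apply, Pi.sub_apply, Pi.smul_apply, smul_eq_mul]; ring
  have hmeas : evolveOp P pi (meas pi) = meas pi := by
    simpa using evolveOp_pow_meas hP0 hP1 hpi0 hstat 1
  rw [hdecomp, map_add, map_sub, map_smul, map_sub, hmeas]
  simp [evolveOp_apply, m]

theorem evolveOp_indicatorVar_le (hP0 : ∀ x y, 0 ≤ P x y) (hP1 : ∀ x, ∑ y, P x y = 1)
    (hpi0 : ∀ x, 0 < pi x) (hpi1 : ∑ x, pi x = 1) (hstat : ∀ y, ∑ x, pi x * P x y = pi y) :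
    evolveOp P pi (indicatorVar pi) ≤ (1 - 16 * psiMin P pi * aMax P pi) • indicatorVar pi := by
  intro A
  rw [evolveOp_indicatorVar hP0 hP1 hpi0 hstat, Pi.smul_apply, smul_eq_mul]
  suffices 16 * psiMin P pi * aMax P pi * indicatorVar pi A
      ≤ ∫ u in (0:ℝ)..1, (meas pi (evolve P pi A u) - meas pi A) ^ 2 by linarith
  by_cases hA : A.Nonempty ∧ A ≠ Finset.univ
  · have hvar := four_mul_psiMin_mul_aMax_le (P := P) (pi := pi) hA.1 hA.2
    have hquarter : indicatorVar pi A ≤ 1 / 4 := by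
      rw [indicatorVar]; nlinarith [sq_nonneg (1 - 2 * meas pi A)]
    nlinarith [mul_nonneg (psiMin_nonneg (P := P) (pi := pi)) (aMax_nonneg (P := P) (pi := pi))]
  · have hzero : indicatorVar pi A = 0 := by
      rcases not_and_or.1 hA with hA | hA
      · simp [Finset.not_nonempty_iff_eq_empty.1 hA, indicatorVar, meas]
      · simp [not_not.1 hA, indicatorVar, meas, hpi1]
    rw [hzero, mul_zero]
    exact intervalIntegral.integral_nonneg zero_le_one fun _ _ => sq_nonneg _

theorem indicatorVar_nonneg (hpi0 : ∀ x, 0 < pi x) (hpi1 : ∑ x, pi x = 1) (B : Finset V) :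
    0 ≤ indicatorVar pi B := by
  have hle : meas pi B ≤ 1 := hpi1 ▸ Finset.sum_le_sum_of_subset_of_nonneg
    (Finset.subset_univ B) fun x _ _ => (hpi0 x).le
  exact mul_nonneg (Finset.sum_nonneg fun x _ => (hpi0 x).le) (sub_nonneg.2 hle)

theorem mul_psiMin_mul_aMax_le_one (hP0 : ∀ x y, 0 ≤ P x y) (hP1 : ∀ x, ∑ y, P x y = 1)
    (hpi0 : ∀ x, 0 < pi x) (hpi1 : ∑ x, pi x = 1) (hstat : ∀ y, ∑ x, pi x * P x y = pi y)
    (hcard : 2 ≤ Fintype.card V) :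
    16 * psiMin P pi * aMax P pi ≤ 1 := by
  obtain ⟨x, y, hxy⟩ := Fintype.exists_pair_of_one_lt_card hcard
  have hxy_le : pi x + pi y ≤ 1 := by
    rw [← hpi1, ← Finset.sum_pair hxy]
    exact Finset.sum_le_sum_of_subset_of_nonneg (Finset.subset_univ _) fun z _ _ => (hpi0 z).le
  have hpos : 0 < indicatorVar pi {x} := by
    simp only [indicatorVar, meas, Finset.sum_singleton]
    nlinarith [hpi0 x, hpi0 y]
  have hle := evolveOp_indicatorVar_le hP0 hP1 hpi0 hpi1 hstat {x}
  have hnonneg : 0 ≤ evolveOp P pi (indicatorVar pi) {x} :=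
    intervalIntegral.integral_nonneg zero_le_one fun _ _ => indicatorVar_nonneg hpi0 hpi1 _
  rw [Pi.smul_apply, smul_eq_mul] at hle
  nlinarith

theorem evolveOp_pow_indicatorVar_le (hP0 : ∀ x y, 0 ≤ P x y) (hP1 : ∀ x, ∑ y, P x y = 1)
    (hpi0 : ∀ x, 0 < pi x) (hpi1 : ∑ x, pi x = 1) (hstat : ∀ y, ∑ x, pi x * P x y = pi y)
    (hcard : 2 ≤ Fintype.card V) (n : ℕ) :
    (evolveOp P pi ^ n) (indicatorVar pi)
      ≤ (1 - 16 * psiMin P pi * aMax P pi) ^ n • indicatorVar pi :=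
  pow_apply_le_pow_smul evolveOp_mono
    (sub_nonneg.2 (mul_psiMin_mul_aMax_le_one hP0 hP1 hpi0 hpi1 hstat hcard))
    (evolveOp_indicatorVar_le hP0 hP1 hpi0 hpi1 hstat) n

end Contraction

section Mixing

variable {P : V → V → ℝ} {pi : V → ℝ}

theorem sum_abs_mul_indicator_sub_meas (hpi0 : ∀ x, 0 < pi x) (hpi1 : ∑ x, pi x = 1)
    (B : Finset V) :
    ∑ y, |pi y * ((if y ∈ B then 1 else 0) - meas pi B)| = 2 * indicatorVar pi B := by
  have hterm (y : V) : |pi y * ((if y ∈ B then 1 else 0) - meas pi B)|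
      = pi y * |(if y ∈ B then 1 else 0) - meas pi B| := by
    rw [abs_mul, abs_of_pos (hpi0 y)]
  have hcompl : ∑ y ∈ Bᶜ, pi y = 1 - meas pi B := by
    rw [← hpi1, ← Finset.sum_add_sum_compl B pi, meas]; ring
  have hm0 : 0 ≤ meas pi B := Finset.sum_nonneg fun x _ => (hpi0 x).le
  have hm1 : meas pi B ≤ 1 := by linarith [Finset.sum_nonneg fun x (_ : x ∈ Bᶜ) => (hpi0 x).le]
  have hin : ∑ y ∈ B, pi y * |(if y ∈ B then 1 else 0) - meas pi B|
      = meas pi B * (1 - meas pi B) :=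
    (Finset.sum_congr rfl fun y hy => by rw [if_pos hy, abs_of_nonneg (sub_nonneg.2 hm1)]).trans
      (Finset.sum_mul B pi _).symm
  have hout : ∑ y ∈ Bᶜ, pi y * |(if y ∈ B then 1 else 0) - meas pi B|
      = (1 - meas pi B) * meas pi B := by
    rw [← hcompl, Finset.sum_mul]
    exact Finset.sum_congr rfl fun y hy => by
      rw [if_neg (Finset.mem_compl.1 hy), zero_sub, abs_neg, abs_of_nonneg hm0]
  simp only [hterm]
  rw [← Finset.sum_add_sum_compl B, hin, hout, indicatorVar]
  ring

theorem sum_abs_pow_sub_le (hP0 : ∀ x y, 0 ≤ P x y) (hP1 : ∀ x, ∑ y, P x y = 1)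
    (hpi0 : ∀ x, 0 < pi x) (hpi1 : ∑ x, pi x = 1) (hstat : ∀ y, ∑ x, pi x * P x y = pi y)
    (hcard : 2 ≤ Fintype.card V) (n : ℕ) (x : V) :
    ∑ y, |(Matrix.of P ^ n) x y - pi y| ≤ 2 * (1 - 16 * psiMin P pi * aMax P pi) ^ n := by
  set T := evolveOp P pi ^ n
  set f : V → Finset V → ℝ := fun y B => pi y * ((if y ∈ B then 1 else 0) - meas pi B)
  have hf (y : V) : f y = fun B => ∑ x ∈ B, pi x * (Pi.single y 1 - pi y • 1 : V → ℝ) x := by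
    funext B
    simp [f, meas, Pi.single_apply, mul_sub, Finset.sum_sub_distrib, Finset.mul_sum, mul_comm]
  have hP : Matrix.of P ∈ rowStochastic ℝ V := mem_rowStochastic_iff_sum.2 ⟨hP0, hP1⟩
  have hTf (y : V) : T (f y) {x} = pi x * ((Matrix.of P ^ n) x y - pi y) := by
    rw [hf, evolveOp_pow_sum_mul hP0 hpi0 hstat]
    dsimp only
    rw [Finset.sum_singleton, mulVec_sub, mulVec_smul,
      one_vecMul_of_mem_rowStochastic (pow_mem hP n), mulVec_single]
    simp
  have hT : Monotone T := by
    rw [Module.End.coe_pow]; exact evolveOp_mono.iterate n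
  have hsum : ∑ y, |f y| = (2 : ℝ) • indicatorVar pi := by
    funext B
    simp only [Finset.sum_apply, Pi.abs_apply, Pi.smul_apply, smul_eq_mul, f]
    exact sum_abs_mul_indicator_sub_meas hpi0 hpi1 B
  have hbound : pi x * ∑ y, |(Matrix.of P ^ n) x y - pi y|
      ≤ pi x * (2 * (1 - 16 * psiMin P pi * aMax P pi) ^ n) :=
    calc pi x * ∑ y, |(Matrix.of P ^ n) x y - pi y|
        = ∑ y, |T (f y) {x}| := by
          simp only [hTf, abs_mul, abs_of_pos (hpi0 x), Finset.mul_sum]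
      _ ≤ ∑ y, T |f y| {x} := Finset.sum_le_sum fun y _ => abs_map_le_map_abs hT (f y) {x}
      _ = 2 * T (indicatorVar pi) {x} := by
          rw [← Finset.sum_apply, ← map_sum, hsum, map_smul, Pi.smul_apply, smul_eq_mul]
      _ ≤ 2 * ((1 - 16 * psiMin P pi * aMax P pi) ^ n * indicatorVar pi {x}) := by
          gcongr
          exact evolveOp_pow_indicatorVar_le hP0 hP1 hpi0 hpi1 hstat hcard n {x}
      _ ≤ pi x * (2 * (1 - 16 * psiMin P pi * aMax P pi) ^ n) := by
          have hgap := sub_nonneg.2 (mul_psiMin_mul_aMax_le_one hP0 hP1 hpi0 hpi1 hstat hcard)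
          have hvar : indicatorVar pi {x} ≤ pi x := by
            simp only [indicatorVar, meas, Finset.sum_singleton]
            nlinarith [hpi0 x]
          nlinarith [mul_le_mul_of_nonneg_left hvar (pow_nonneg hgap n)]
  exact le_of_mul_le_mul_left hbound (hpi0 x)

end Mixing

section Eigenvalues

open Complex

theorem dotProduct_eq_zero_of_mulVec_eq_smul {M : Matrix V V ℝ} {pi : V → ℝ}
    (hpi : pi ᵥ* M = pi) {lam : ℂ} (hlam : lam ≠ 1) {g : V → ℂ}
    (hg : M.map ofRealHom *ᵥ g = lam • g) : (ofRealHom ∘ pi) ⬝ᵥ g = 0 := by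
  have h := dotProduct_mulVec (ofRealHom ∘ pi) (M.map ofRealHom) g
  have hvec : (ofRealHom ∘ pi) ᵥ* M.map ofRealHom = ofRealHom ∘ pi := by
    funext y; rw [← RingHom.map_vecMul, hpi]; rfl
  rw [hg, hvec, dotProduct_smul, smul_eq_mul] at h
  have hfix : (lam - 1) * ((ofRealHom ∘ pi) ⬝ᵥ g) = 0 := by rw [sub_mul, h]; ring
  exact (mul_eq_zero.1 hfix).resolve_left (sub_ne_zero.2 hlam)

theorem norm_le_of_sum_abs_pow_sub_le {M : Matrix V V ℝ} {pi : V → ℝ} {C r : ℝ} (hr : 0 ≤ r)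
    (hmix : ∀ n x, ∑ y, |(M ^ n) x y - pi y| ≤ C * r ^ n) {lam : ℂ} {g : V → ℂ} (hg0 : g ≠ 0)
    (hg : M.map ofRealHom *ᵥ g = lam • g) (horth : (ofRealHom ∘ pi) ⬝ᵥ g = 0) : ‖lam‖ ≤ r := by
  have hpow (n : ℕ) : (M ^ n).map ofRealHom *ᵥ g = lam ^ n • g := by
    rw [Matrix.map_pow]
    induction n with
    | zero => simp
    | succ n ih => rw [pow_succ, ← mulVec_mulVec, hg, mulVec_smul, ih, smul_smul, pow_succ']
  obtain ⟨x₀, -⟩ := Function.ne_iff.1 hg0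
  have hg_pos : 0 < ‖g‖ := norm_pos_iff.2 hg0
  refine le_of_forall_pow_le_mul_pow (C := C) hr fun n => le_of_mul_le_mul_right ?_ hg_pos
  have hC : 0 ≤ C * r ^ n := (Finset.sum_nonneg fun _ _ => abs_nonneg _).trans (hmix n x₀)
  rw [← norm_pow, ← norm_smul, ← hpow n]
  refine (pi_norm_le_iff_of_nonneg (by positivity)).2 fun x => ?_
  calc ‖((M ^ n).map ofRealHom *ᵥ g) x‖ = ‖∑ y, (((M ^ n) x y - pi y : ℝ) : ℂ) * g y‖ := by
        simp only [dotProduct, Function.comp_apply, ofRealHom_eq_coe] at horth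
        simp [mulVec, dotProduct, sub_mul, Finset.sum_sub_distrib, horth]
    _ ≤ ∑ y, |(M ^ n) x y - pi y| * ‖g‖ := norm_sum_le_of_le _ fun y _ => by
        rw [norm_mul, norm_real, Real.norm_eq_abs]
        exact mul_le_mul_of_nonneg_left (norm_le_pi_norm g y) (abs_nonneg _)
    _ ≤ C * r ^ n * ‖g‖ := by
        rw [← Finset.sum_mul]; exact mul_le_mul_of_nonneg_right (hmix n x) hg_pos.le

end Eigenvalues

theorem stmt16_general {V : Type*} [Fintype V] (P : V → V → ℝ) (pi : V → ℝ)
    (hP0 : ∀ x y, 0 ≤ P x y) (hP1 : ∀ x, ∑ y, P x y = 1)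
    (hpi0 : ∀ x, 0 < pi x) (hpi1 : ∑ x, pi x = 1)
    (hstat : ∀ y, ∑ x, pi x * P x y = pi y)
    (hcard : 2 ≤ Fintype.card V)
    (lam : ℂ) (hlam : lam ≠ 1)
    (hev : ∃ g : V → ℂ, g ≠ 0 ∧ ∀ x, ∑ y, (P x y : ℂ) * g y = lam * g x) :
    16 * psiMin P pi * aMax P pi ≤ 1 - ‖lam‖ := by
  obtain ⟨g, hg0, hg⟩ := hev
  have hstat' : pi ᵥ* Matrix.of P = pi := funext fun y => by simp [vecMul, dotProduct, hstat]
  have hg' : (Matrix.of P).map Complex.ofRealHom *ᵥ g = lam • g :=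
    funext fun x => by simp [mulVec, dotProduct, hg]
  have hgap := sub_nonneg.2 (mul_psiMin_mul_aMax_le_one hP0 hP1 hpi0 hpi1 hstat hcard)
  have hlam_le := norm_le_of_sum_abs_pow_sub_le hgap
    (sum_abs_pow_sub_le hP0 hP1 hpi0 hpi1 hstat hcard) hg0 hg'
    (dotProduct_eq_zero_of_mulVec_eq_smul hstat' hlam hg')
  linarith

/-- For a finite irreducible Markov chain with at least two states, every
complex eigenvalue `λ ≠ 1` satisfies `1 − |λ| ≥ 16 Ψ_min A_max`. -/
theorem stmt16 {V : Type*} [Fintype V] [Nonempty V] (P : V → V → ℝ) (pi : V → ℝ)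
    (hP0 : ∀ x y, 0 ≤ P x y) (hP1 : ∀ x, ∑ y, P x y = 1)
    (hirr : ∀ x y : V, ∃ t : ℕ, 0 < (Matrix.of P ^ t) x y)
    (hpi0 : ∀ x, 0 < pi x) (hpi1 : ∑ x, pi x = 1)
    (hstat : ∀ y, ∑ x, pi x * P x y = pi y)
    (hcard : 2 ≤ Fintype.card V)
    (lam : ℂ) (hlam : lam ≠ 1)
    (hev : ∃ g : V → ℂ, g ≠ 0 ∧ ∀ x, ∑ y, (P x y : ℂ) * g y = lam * g x) :
    16 * psiMin P pi * aMax P pi ≤ 1 - ‖lam‖ :=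
  stmt16_general P pi hP0 hP1 hpi0 hpi1 hstat hcard lam hlam hev

end Stmt16
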